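/- Let V be a finite set, Q : V × V → ℤ antisymmetric, n ≥ 2, q := ω^{n²}. The map X_v ↦ Z_v^n extends to an injective R-algebra homomorphism from the quantum torus T_q(Q) = R⟨X_v^{±1}⟩/(X_v X_w = q^{2Q(v,w)} X_w X_v) into T_ω(Q) = R⟨Z_v^{±1}⟩/(Z_v Z_w = ω^{2Q(v,w)} Z_w Z_v). -/

import Mathlib

/-- The image of a unit of `R` in the units of an `R`-algebra `A`. -/
noncomputable def unitsMap {R A : Type} [CommRing R] [Ring A] [Algebra R A] (w : Rˣ) : Aˣ :=
  Units.map (algebraMap R A).toMonoidHom w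

/-- The (unordered) Laurent monomial `∏ Z_v^{t_v}` along a list of vertices. -/
def listMono {A V : Type} [Ring A] (Z : V → Aˣ) (t : V → ℤ) (l : List V) : Aˣ :=
  (l.map fun v => Z v ^ t v).prod

/-- `A`, with distinguished units `Z_v`, is the quantum torus
`T_ω(Q) = R⟨Z_v^{±1}⟩/(Z_v Z_w = ω^{2Q(v,w)} Z_w Z_v)`: the relations hold, and the
monomials `Z^t`, `t ∈ ℤ^V`, form an `R`-basis of `A`. -/
structure IsQuantumTorus (R : Type) [CommRing R] {V : Type} [Fintype V] [LinearOrder V]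
    (A : Type) [Ring A] [Algebra R A] (w : Rˣ) (Q : V → V → ℤ) (Z : V → Aˣ) : Prop where
  rel : ∀ v v', Z v * Z v' = unitsMap (A := A) w ^ (2 * Q v v') * (Z v' * Z v)
  free : Function.Bijective fun c : (V → ℤ) →₀ R =>
    c.sum fun t r => r • ((listMono Z t (Finset.univ.sort (· ≤ ·)) : Aˣ) : A)
/-!
Both tori have `R`-bases of ordered monomials `Z^t`, `t ∈ ℤ^V`, and reordering a product of two
of them gives `Z^t Z^s = ω^{φ(t,s)} Z^{t+s}` for an integer-valued form `φ` that is bilinear in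
`(t, s)`. So the linear map `X^t ↦ Z^{nt}` is injective, as `t ↦ nt` is, and multiplicative,
since `ω^{φ(nt,ns)} = ω^{n²φ(t,s)} = q^{φ(t,s)}`.
-/

section Group

variable {G : Type*} [Group G] {c : G}

theorem mul_zpow_eq_of_mul_eq (hc : ∀ x, Commute c x) {g h : G} (hgh : g * h = c * (h * g))
    (b : ℤ) : g * h ^ b = c ^ b * (h ^ b * g) := by
  have : SemiconjBy g h (c * h) := by rw [SemiconjBy, hgh, mul_assoc]
  rw [this.zpow_right b, (hc h).mul_zpow, mul_assoc]

theorem zpow_mul_zpow_eq_of_mul_eq (hc : ∀ x, Commute c x) {g h : G} {k : ℤ}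
    (hgh : g * h = c ^ k * (h * g)) (a b : ℤ) :
    g ^ a * h ^ b = c ^ (k * a * b) * (h ^ b * g ^ a) := by
  have hck : ∀ x, Commute (c ^ k) x := fun x => (hc x).zpow_left k
  have hhg : h ^ b * g = (c ^ k) ^ (-b) * (g * h ^ b) := by
    rw [mul_zpow_eq_of_mul_eq hck hgh, ← mul_assoc, ← zpow_add, neg_add_cancel, zpow_zero,
      one_mul]
  rw [mul_zpow_eq_of_mul_eq (fun x => (hck x).zpow_left (-b)) hhg a, ← mul_assoc, ← zpow_mul,
    ← zpow_mul, ← zpow_add, show k * a * b + k * (-b * a) = 0 by ring, zpow_zero, one_mul]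

theorem mul_zpow_mul_left_comm (hc : ∀ x, Commute c x) (k : ℤ) (x y : G) :
    x * (c ^ k * y) = c ^ k * (x * y) :=
  ((hc x).zpow_left k).symm.left_comm y

theorem zpow_mul_zpow_mul (k m : ℤ) (y : G) : c ^ k * (c ^ m * y) = c ^ (k + m) * y := by
  rw [← mul_assoc, zpow_add]

variable {V : Type*}

/-- `listMono` over an arbitrary group: `listMono Z t l = orderedMonomial Z t l` by definition. -/
def orderedMonomial (Z : V → G) (t : V → ℤ) (l : List V) : G :=
  (l.map fun v => Z v ^ t v).prod

@[simp] theorem orderedMonomial_nil (Z : V → G) (t : V → ℤ) : orderedMonomial Z t [] = 1 := rfl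

@[simp] theorem orderedMonomial_cons (Z : V → G) (t : V → ℤ) (v : V) (l : List V) :
    orderedMonomial Z t (v :: l) = Z v ^ t v * orderedMonomial Z t l :=
  List.prod_cons

theorem orderedMonomial_eq_one (Z : V → G) {t : V → ℤ} {l : List V} (ht : ∀ v ∈ l, t v = 0) :
    orderedMonomial Z t l = 1 := by
  induction l <;> simp_all

theorem orderedMonomial_single [DecidableEq V] (Z : V → G) {l : List V} (hl : l.Nodup) {v : V}
    (hv : v ∈ l) (k : ℤ) : orderedMonomial Z (Pi.single v k) l = Z v ^ k := by
  induction l with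
  | nil => simp at hv
  | cons u l ih =>
    obtain ⟨hu, hl⟩ := List.nodup_cons.1 hl
    rcases List.mem_cons.1 hv with rfl | hv
    · rw [orderedMonomial_cons, Pi.single_eq_same, orderedMonomial_eq_one, mul_one]
      exact fun u hu' => by rw [Pi.single_eq_of_ne (ne_of_mem_of_not_mem hu' hu)]
    · rw [orderedMonomial_cons, Pi.single_eq_of_ne (ne_of_mem_of_not_mem hv hu).symm, zpow_zero,
        one_mul, ih hl hv]

def phase (Q : V → V → ℤ) (t s : V → ℤ) : List V → ℤ
  | [] => 0
  | v :: l => phase Q t s l - (l.map fun v' => Q v v' * s v * t v').sum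

theorem phase_smul (Q : V → V → ℤ) (k : ℤ) (t s : V → ℤ) (l : List V) :
    phase Q (k • t) (k • s) l = k ^ 2 * phase Q t s l := by
  induction l with
  | nil => simp [phase]
  | cons v l ih =>
    simp only [phase, ih, Pi.smul_apply, smul_eq_mul, mul_sub, ← List.sum_map_mul_left]
    congr 2
    exact List.map_congr_left fun v' _ => by ring

variable {Q : V → V → ℤ} {Z : V → G}

theorem zpow_mul_orderedMonomial (hc : ∀ x, Commute c x)
    (hZ : ∀ v v', Z v * Z v' = c ^ Q v v' * (Z v' * Z v)) (v : V) (b : ℤ) (t : V → ℤ)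
    (l : List V) :
    Z v ^ b * orderedMonomial Z t l
      = c ^ (l.map fun v' => Q v v' * b * t v').sum * (orderedMonomial Z t l * Z v ^ b) := by
  induction l with
  | nil => simp
  | cons u l ih =>
    calc Z v ^ b * (Z u ^ t u * orderedMonomial Z t l)
        = c ^ (Q v u * b * t u) * (Z u ^ t u * (Z v ^ b * orderedMonomial Z t l)) := by
          rw [← mul_assoc (G := G), zpow_mul_zpow_eq_of_mul_eq hc (hZ v u), mul_assoc (G := G),
            mul_assoc (G := G)]
      _ = c ^ (Q v u * b * t u) * (Z u ^ t u * (c ^ (l.map fun v' => Q v v' * b * t v').sum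
            * (orderedMonomial Z t l * Z v ^ b))) := by
          rw [ih]
      _ = c ^ ((u :: l).map fun v' => Q v v' * b * t v').sum
            * (Z u ^ t u * orderedMonomial Z t l * Z v ^ b) := by
          rw [mul_zpow_mul_left_comm hc, zpow_mul_zpow_mul, mul_assoc (G := G), List.map_cons,
            List.sum_cons]

theorem orderedMonomial_mul (hc : ∀ x, Commute c x)
    (hZ : ∀ v v', Z v * Z v' = c ^ Q v v' * (Z v' * Z v)) (t s : V → ℤ) (l : List V) :
    orderedMonomial Z t l * orderedMonomial Z s l
      = c ^ phase Q t s l * orderedMonomial Z (t + s) l := by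
  induction l with
  | nil => simp [phase]
  | cons v l ih =>
    set k := (l.map fun v' => Q v v' * s v * t v').sum
    have hswap : orderedMonomial Z t l * Z v ^ s v
        = c ^ (-k) * (Z v ^ s v * orderedMonomial Z t l) := by
      rw [zpow_mul_orderedMonomial hc hZ, zpow_mul_zpow_mul, neg_add_cancel, zpow_zero, one_mul]
    calc Z v ^ t v * orderedMonomial Z t l * (Z v ^ s v * orderedMonomial Z s l)
        = Z v ^ t v * ((orderedMonomial Z t l * Z v ^ s v) * orderedMonomial Z s l) := by
          simp only [mul_assoc (G := G)]
      _ = c ^ (-k) * (Z v ^ t v * Z v ^ s v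
            * (orderedMonomial Z t l * orderedMonomial Z s l)) := by
          rw [hswap]
          simp only [mul_assoc (G := G)]
          rw [mul_zpow_mul_left_comm hc]
      _ = c ^ (-k) * (Z v ^ (t + s) v * (c ^ phase Q t s l * orderedMonomial Z (t + s) l)) := by
          rw [ih, Pi.add_apply, zpow_add]
      _ = c ^ phase Q t s (v :: l) * (Z v ^ (t + s) v * orderedMonomial Z (t + s) l) := by
          rw [phase, mul_zpow_mul_left_comm hc, zpow_mul_zpow_mul, neg_add_eq_sub]

end Group

theorem LinearMap.map_mul_of_basis {ι R A B : Type*} [CommSemiring R] [Semiring A] [Semiring B]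
    [Algebra R A] [Algebra R B] (b : Module.Basis ι R A) (f : A →ₗ[R] B)
    (h : ∀ i j, f (b i * b j) = f (b i) * f (b j)) (x y : A) : f (x * y) = f x * f y :=
  LinearMap.congr_fun₂
    (LinearMap.ext_basis (B := (LinearMap.mul R A).compr₂ f)
      (B' := (LinearMap.mul R B).compl₁₂ f f) b b h) x y

section UnitsMap

variable {R A : Type} [CommRing R] [Ring A] [Algebra R A]

theorem unitsMap_commute (w : Rˣ) (x : Aˣ) : Commute (unitsMap w) x :=
  Units.ext <| Algebra.commutes (w : R) (x : A)

theorem unitsMap_zpow (w : Rˣ) (k : ℤ) : unitsMap (A := A) (w ^ k) = unitsMap w ^ k :=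
  map_zpow (Units.map (algebraMap R A).toMonoidHom) w k

end UnitsMap

namespace IsQuantumTorus

variable {R : Type} [CommRing R] {V : Type} [Fintype V] [LinearOrder V] {A : Type} [Ring A]
  [Algebra R A] {w : Rˣ} {Q : V → V → ℤ} {Z : V → Aˣ} (hT : IsQuantumTorus R A w Q Z)

noncomputable def basis : Module.Basis (V → ℤ) R A :=
  Module.Basis.mk hT.free.injective <| by
    rw [← Finsupp.range_linearCombination, LinearMap.range_eq_top.2 hT.free.surjective]

theorem basis_apply (t : V → ℤ) :
    hT.basis t = ((orderedMonomial Z t (Finset.univ.sort (· ≤ ·)) : Aˣ) : A) :=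
  Module.Basis.mk_apply ..

theorem basis_zero : hT.basis 0 = 1 := by
  rw [basis_apply, orderedMonomial_eq_one Z (t := 0) fun _ _ => rfl, Units.val_one]

theorem basis_single [DecidableEq V] (v : V) (k : ℤ) :
    hT.basis (Pi.single v k) = ((Z v ^ k : Aˣ) : A) := by
  rw [basis_apply, orderedMonomial_single Z (Finset.sort_nodup _ _)
    ((Finset.mem_sort _).2 (Finset.mem_univ v))]

theorem basis_mul_basis (t s : V → ℤ) :
    hT.basis t * hT.basis s
      = ((w ^ phase (fun v v' => 2 * Q v v') t s (Finset.univ.sort (· ≤ ·)) : Rˣ) : R)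
          • hT.basis (t + s) := by
  rw [basis_apply, basis_apply, basis_apply, ← Units.val_mul,
    orderedMonomial_mul (unitsMap_commute w) hT.rel, Algebra.smul_def, Units.val_mul,
    ← unitsMap_zpow]
  rfl

end IsQuantumTorus

theorem stmt14_general {R : Type} [CommRing R] (w : Rˣ)
    (n : ℕ) (hn : 2 ≤ n)
    {V : Type} [Fintype V] [LinearOrder V]
    (Q : V → V → ℤ)
    (Aq Aw : Type) [Ring Aq] [Algebra R Aq] [Ring Aw] [Algebra R Aw]
    (X : V → Aqˣ) (Z : V → Awˣ)
    (hq : IsQuantumTorus R Aq (w ^ (n ^ 2)) Q X)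
    (hw : IsQuantumTorus R Aw w Q Z) :
    ∃ f : Aq →ₐ[R] Aw, Function.Injective f ∧ ∀ v, f ((X v : Aq)) = ((Z v : Aw)) ^ n := by
  classical
  let f := hq.basis.constr R fun t => hw.basis ((n : ℤ) • t)
  have hf (t : V → ℤ) : f (hq.basis t) = hw.basis ((n : ℤ) • t) := hq.basis.constr_basis R _ t
  have hf_one : f 1 = 1 := by rw [← hq.basis_zero, hf, smul_zero, hw.basis_zero]
  have hf_mul : ∀ x y, f (x * y) = f x * f y :=
    LinearMap.map_mul_of_basis hq.basis f fun t s => by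
      rw [hq.basis_mul_basis, map_smul, hf, hf, hf, hw.basis_mul_basis, phase_smul, smul_add,
        ← zpow_natCast, ← zpow_mul, Nat.cast_pow]
  have hf_inj : Function.Injective f :=
    hq.basis.injective_constr_of_linearIndependent <|
      hw.basis.linearIndependent.comp _ (smul_right_injective _ (by omega))
  refine ⟨AlgHom.ofLinearMap f hf_one hf_mul, hf_inj, fun v => ?_⟩
  rw [AlgHom.ofLinearMap_apply, ← zpow_one (X v), ← hq.basis_single, hf, ← Pi.single_smul,
    smul_eq_mul, mul_one, hw.basis_single, zpow_natCast, Units.val_pow_eq_pow_val]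

/-- The map `X_v ↦ Z_v^n` extends to an injective `R`-algebra homomorphism from the
Fock–Goncharov quantum torus `T_q(Q)` (with `q = ω^{n²}`) into its `n`-th root version
`T_ω(Q)`. -/
theorem stmt14 {R : Type} [CommRing R] [IsDomain R] (w σ : Rˣ) (hσ : σ * σ = w)
    (n : ℕ) (hn : 2 ≤ n)
    {V : Type} [Fintype V] [LinearOrder V]
    (Q : V → V → ℤ) (hQ : ∀ u v, Q u v = - Q v u)
    (Aq Aw : Type) [Ring Aq] [Algebra R Aq] [Ring Aw] [Algebra R Aw]
    (X : V → Aqˣ) (Z : V → Awˣ)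
    (hq : IsQuantumTorus R Aq (w ^ (n ^ 2)) Q X)
    (hw : IsQuantumTorus R Aw w Q Z) :
    ∃ f : Aq →ₐ[R] Aw, Function.Injective f ∧ ∀ v, f ((X v : Aq)) = ((Z v : Aw)) ^ n :=
  stmt14_general w n hn Q Aq Aw X Z hq hw
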